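/- arXiv:2603.20598 — 4 statements merged into one kernel-verified Lean document; each statement's English description precedes it below -/
import Mathlib

section
/- For a nonplanar full binary tree T with n leaves, the number of binary-admissible cuts of T (including the empty cut, but not the total cut) equals 2^n - 1; equivalently, the terms of the coproduct Δ(T), which also includes the term T⊗1 for the total cut, are in bijection with the subsets of the leaf set L(T). -/
/-- Full binary rooted trees. -/
inductive BTree : Type
  | leaf : BTree
  | node : BTree → BTree → BTree
  deriving DecidableEq

namespace BTree

def leafCount : BTree → ℕ
  | leaf => 1
  | node l r => leafCount l + leafCount r

/-- The subtree of `T` rooted at the vertex reached from the root by the path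
`p` (`false` = go to first child, `true` = second child); `none` if there is
no such vertex. -/
def subtreeAt : BTree → List Bool → Option BTree
  | t, [] => some t
  | leaf, _ :: _ => none
  | node l r, b :: p => if b then subtreeAt r p else subtreeAt l p

/-- `p` encodes an edge of `T`: the edge joining the (non-root) vertex at
position `p` to its parent. -/
def IsEdge (T : BTree) (p : List Bool) : Prop :=
  p ≠ [] ∧ (subtreeAt T p).isSome

/-- A binary-admissible cut of `T`: a set of edges of `T` such that no two of
its edges lie on a common path from the root to a leaf (no edge is an ancestor
of another), and no two of its edges share the same parent vertex. -/
def IsBinAdmissibleCut (T : BTree) (C : Set (List Bool)) : Prop :=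
  (∀ p ∈ C, IsEdge T p) ∧
  (∀ p ∈ C, ∀ q ∈ C, p ≠ q → ¬ p <+: q ∧ p.dropLast ≠ q.dropLast)

end BTree

namespace BTree

/-! ### Auxiliary definitions and lemmas -/

abbrev Cut (T : BTree) := {C : Set (List Bool) // IsBinAdmissibleCut T C}

abbrev LeafPos (T : BTree) := {p : List Bool // subtreeAt T p = some BTree.leaf}

@[simp] lemma subtreeAt_nil (t : BTree) : subtreeAt t [] = some t := by cases t <;> rfl

@[simp] lemma subtreeAt_leaf_cons (b : Bool) (p : List Bool) :
    subtreeAt leaf (b :: p) = none := rfl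

@[simp] lemma subtreeAt_node_cons (l r : BTree) (b : Bool) (p : List Bool) :
    subtreeAt (node l r) (b :: p) = subtreeAt (if b then r else l) p := by
  cases b <;> rfl

lemma cut_leaf {C : Set (List Bool)} (h : IsBinAdmissibleCut leaf C) : C = ∅ := by
  ext p
  simp only [Set.mem_empty_iff_false, iff_false]
  intro hp
  obtain ⟨hne, hs⟩ := h.1 p hp
  cases p with
  | nil => exact hne rfl
  | cons b q => simp at hs

instance : Unique (Cut leaf) where
  default := ⟨∅, ⟨fun p hp => absurd hp (Set.notMem_empty p),
    fun p hp => absurd hp (Set.notMem_empty p)⟩⟩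
  uniq C := Subtype.ext (cut_leaf C.2)

/-- If `[b] ∉ C`, the part of a cut in the `b`-subtree is a cut of it. -/
lemma cut_part {l r : BTree} {C : Set (List Bool)} (h : IsBinAdmissibleCut (node l r) C)
    (b : Bool) (hb : [b] ∉ C) : IsBinAdmissibleCut (if b then r else l) {p | b :: p ∈ C} := by
  have hne : ∀ p ∈ {p | b :: p ∈ C}, p ≠ ([] : List Bool) := by
    rintro p hp rfl; exact hb hp
  constructor
  · intro p hp
    obtain ⟨-, hs⟩ := h.1 _ hp
    refine ⟨hne p hp, ?_⟩
    simpa using hs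
  · intro p hp q hq hpq
    obtain ⟨h1, h2⟩ := h.2 _ hp _ hq (by simpa using hpq)
    constructor
    · intro hpre; exact h1 (List.cons_prefix_cons.2 ⟨rfl, hpre⟩)
    · obtain ⟨x, xs, rfl⟩ := List.exists_cons_of_ne_nil (hne p hp)
      obtain ⟨y, ys, rfl⟩ := List.exists_cons_of_ne_nil (hne q hq)
      intro hdl
      exact h2 (by simpa [List.dropLast_cons₂] using congrArg (b :: ·) hdl)

/-- If `[b] ∈ C`, every other member of the cut lies in the other subtree. -/
lemma cut_mem_single {l r : BTree} {C : Set (List Bool)} (h : IsBinAdmissibleCut (node l r) C)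
    {b : Bool} (hb : [b] ∈ C) {p : List Bool} (hp : p ∈ C) (hpb : p ≠ [b]) :
    ∃ q, q ≠ [] ∧ p = (!b) :: q := by
  obtain ⟨hne, -⟩ := h.1 p hp
  obtain ⟨x, xs, rfl⟩ := List.exists_cons_of_ne_nil hne
  obtain ⟨h1, h2⟩ := h.2 [b] hb (x :: xs) hp (Ne.symm hpb)
  by_cases hx : x = b
  · subst hx
    rcases xs.eq_nil_or_concat with rfl | _
    · exact absurd rfl hpb
    · exact absurd (List.cons_prefix_cons.2 ⟨rfl, xs.nil_prefix⟩) h1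
  · refine ⟨xs, ?_, ?_⟩
    · rintro rfl
      exact h2 (by simp [List.dropLast])
    · cases b <;> cases x <;> simp_all
  
lemma notMem_of_cut_mem_single {l r : BTree} {C : Set (List Bool)}
    (h : IsBinAdmissibleCut (node l r) C) {b : Bool} (hb : [b] ∈ C) : [!b] ∉ C := by
  intro hnb
  obtain ⟨q, hq, he⟩ := cut_mem_single h hb hnb (by cases b <;> simp)
  simp only [List.cons.injEq] at he
  exact hq he.2.symm

/-- The union of two cuts of the subtrees, pushed into the tree, is a cut. -/
lemma cut_union {l r : BTree} {Cl Cr : Set (List Bool)} (hl : IsBinAdmissibleCut l Cl)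
    (hr : IsBinAdmissibleCut r Cr) :
    IsBinAdmissibleCut (node l r) ((false :: ·) '' Cl ∪ (true :: ·) '' Cr) := by
  have edge : ∀ p ∈ (false :: ·) '' Cl ∪ (true :: ·) '' Cr, IsEdge (node l r) p := by
    rintro p (⟨q, hq, rfl⟩ | ⟨q, hq, rfl⟩)
    · exact ⟨by simp, by simpa using (hl.1 q hq).2⟩
    · exact ⟨by simp, by simpa using (hr.1 q hq).2⟩
  refine ⟨edge, ?_⟩
  have key : ∀ (b : Bool) (D : Set (List Bool)), IsBinAdmissibleCut (if b then r else l) D →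
      ∀ p ∈ D, ∀ q ∈ D, b :: p ≠ b :: q → ¬ b :: p <+: b :: q ∧
        (b :: p).dropLast ≠ (b :: q).dropLast := by
    intro b D hD p hp q hq hne
    have hpq : p ≠ q := by simpa using hne
    obtain ⟨h1, h2⟩ := hD.2 p hp q hq hpq
    constructor
    · intro hpre; exact h1 (List.cons_prefix_cons.1 hpre).2
    · obtain ⟨x, xs, rfl⟩ := List.exists_cons_of_ne_nil (hD.1 p hp).1
      obtain ⟨y, ys, rfl⟩ := List.exists_cons_of_ne_nil (hD.1 q hq).1
      simpa [List.dropLast_cons₂] using h2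
  rintro p (⟨p', hp', rfl⟩ | ⟨p', hp', rfl⟩) q (⟨q', hq', rfl⟩ | ⟨q', hq', rfl⟩) hne
  · exact key false Cl (by simpa using hl) p' hp' q' hq' hne
  · refine ⟨by simp [List.cons_prefix_cons], ?_⟩
    obtain ⟨x, xs, rfl⟩ := List.exists_cons_of_ne_nil (hl.1 p' hp').1
    obtain ⟨y, ys, rfl⟩ := List.exists_cons_of_ne_nil (hr.1 q' hq').1
    simp [List.dropLast_cons₂]
  · refine ⟨by simp [List.cons_prefix_cons], ?_⟩
    obtain ⟨x, xs, rfl⟩ := List.exists_cons_of_ne_nil (hr.1 p' hp').1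
    obtain ⟨y, ys, rfl⟩ := List.exists_cons_of_ne_nil (hl.1 q' hq').1
    simp [List.dropLast_cons₂]
  · exact key true Cr (by simpa using hr) p' hp' q' hq' hne

/-- Cutting the edge to the `b`-child together with a cut of the other subtree. -/
lemma cut_insert {l r : BTree} {b : Bool} {D : Set (List Bool)}
    (hD : IsBinAdmissibleCut (if b then l else r) D) :
    IsBinAdmissibleCut (node l r) (insert [b] (((!b) :: ·) '' D)) := by
  constructor
  · rintro p (rfl | ⟨q, hq, rfl⟩)
    · exact ⟨by simp, by cases b <;> simp⟩
    · refine ⟨by simp, ?_⟩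
      have := (hD.1 q hq).2
      cases b <;> simpa using this
  · have hne : ∀ q ∈ D, q ≠ ([] : List Bool) := fun q hq => (hD.1 q hq).1
    rintro p (rfl | ⟨p', hp', rfl⟩) q (rfl | ⟨q', hq', rfl⟩) hpq
    · exact absurd rfl hpq
    · obtain ⟨x, xs, rfl⟩ := List.exists_cons_of_ne_nil (hne q' hq')
      refine ⟨?_, ?_⟩
      · intro hpre
        rcases List.cons_prefix_cons.1 hpre with ⟨hb, -⟩
        exact (Bool.not_ne_self b) (by simpa using hb.symm)
      · simp [List.dropLast_cons₂, List.dropLast]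
    · obtain ⟨x, xs, rfl⟩ := List.exists_cons_of_ne_nil (hne p' hp')
      refine ⟨?_, ?_⟩
      · intro hpre
        rcases List.cons_prefix_cons.1 hpre with ⟨hb, -⟩
        exact (Bool.not_ne_self b) (by simpa using hb)
      · simp [List.dropLast_cons₂, List.dropLast]
    · have hpq' : p' ≠ q' := by simpa using hpq
      obtain ⟨h1, h2⟩ := hD.2 p' hp' q' hq' hpq'
      obtain ⟨x, xs, rfl⟩ := List.exists_cons_of_ne_nil (hne p' hp')
      obtain ⟨y, ys, rfl⟩ := List.exists_cons_of_ne_nil (hne q' hq')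
      exact ⟨fun hpre => h1 (List.cons_prefix_cons.1 hpre).2,
        by simpa [List.dropLast_cons₂] using h2⟩

open scoped Classical in
/-- The structural equivalence for cuts of a `node`. -/
noncomputable def cutEquivNode (l r : BTree) :
    Cut (node l r) ≃ (Cut l × Cut r) ⊕ (Cut l ⊕ Cut r) where
  toFun C :=
    if h1 : [false] ∈ C.1 then
      Sum.inr (Sum.inr ⟨{p | true :: p ∈ C.1},
        by simpa using cut_part C.2 true (by simpa using notMem_of_cut_mem_single C.2 h1)⟩)
    else if h2 : [true] ∈ C.1 then
      Sum.inr (Sum.inl ⟨{p | false :: p ∈ C.1},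
        by simpa using cut_part C.2 false h1⟩)
    else
      Sum.inl (⟨{p | false :: p ∈ C.1}, by simpa using cut_part C.2 false h1⟩,
        ⟨{p | true :: p ∈ C.1}, by simpa using cut_part C.2 true h2⟩)
  invFun x :=
    match x with
    | Sum.inl (cl, cr) => ⟨(false :: ·) '' cl.1 ∪ (true :: ·) '' cr.1, cut_union cl.2 cr.2⟩
    | Sum.inr (Sum.inl cl) =>
        ⟨insert [true] ((false :: ·) '' cl.1), by
          simpa using cut_insert (l := l) (r := r) (b := true) (by simpa using cl.2)⟩
    | Sum.inr (Sum.inr cr) =>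
        ⟨insert [false] ((true :: ·) '' cr.1), by
          simpa using cut_insert (l := l) (r := r) (b := false) (by simpa using cr.2)⟩
  left_inv := by
    rintro ⟨C, hC⟩
    by_cases h1 : [false] ∈ C
    · simp only [h1, dif_pos]
      apply Subtype.ext
      ext p
      simp only [Set.mem_insert_iff, Set.mem_image, Set.mem_setOf_eq]
      constructor
      · rintro (rfl | ⟨q, hq, rfl⟩)
        · exact h1
        · exact hq
      · intro hp
        by_cases hpb : p = [false]
        · exact Or.inl hpb
        · obtain ⟨q, -, rfl⟩ := cut_mem_single hC h1 hp hpb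
          exact Or.inr ⟨q, by simpa using hp, by simp⟩
    · by_cases h2 : [true] ∈ C
      · simp only [h1, h2, dif_neg, dif_pos, not_false_iff]
        apply Subtype.ext
        ext p
        simp only [Set.mem_insert_iff, Set.mem_image, Set.mem_setOf_eq]
        constructor
        · rintro (rfl | ⟨q, hq, rfl⟩)
          · exact h2
          · exact hq
        · intro hp
          by_cases hpb : p = [true]
          · exact Or.inl hpb
          · obtain ⟨q, -, rfl⟩ := cut_mem_single hC h2 hp hpb
            exact Or.inr ⟨q, by simpa using hp, by simp⟩
      · simp only [h1, h2, dif_neg, not_false_iff]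
        apply Subtype.ext
        ext p
        simp only [Set.mem_union, Set.mem_image, Set.mem_setOf_eq]
        constructor
        · rintro (⟨q, hq, rfl⟩ | ⟨q, hq, rfl⟩) <;> assumption
        · intro hp
          obtain ⟨x, xs, rfl⟩ := List.exists_cons_of_ne_nil (hC.1 p hp).1
          cases x
          · exact Or.inl ⟨xs, hp, rfl⟩
          · exact Or.inr ⟨xs, hp, rfl⟩
  right_inv := by
    have hni : ∀ (b c : Bool) (D : Set (List Bool)), (∀ q ∈ D, q ≠ ([] : List Bool)) →
        [b] ∉ (c :: ·) '' D := by
      rintro b c D hD ⟨q, hq, he⟩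
      simp only [List.cons.injEq] at he
      exact hD q hq he.2
    rintro (⟨cl, cr⟩ | cl | cr)
    · have h1 : [false] ∉ (false :: ·) '' cl.1 ∪ (true :: ·) '' cr.1 := by
        rintro (h | h)
        · exact hni false false cl.1 (fun q hq => (cl.2.1 q hq).1) h
        · exact hni false true cr.1 (fun q hq => (cr.2.1 q hq).1) h
      have h2 : [true] ∉ (false :: ·) '' cl.1 ∪ (true :: ·) '' cr.1 := by
        rintro (h | h)
        · exact hni true false cl.1 (fun q hq => (cl.2.1 q hq).1) h
        · exact hni true true cr.1 (fun q hq => (cr.2.1 q hq).1) h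
      simp only [h1, h2, dif_neg, not_false_iff, Sum.inl.injEq, Prod.mk.injEq,
        Subtype.mk.injEq]
      constructor <;> ext p <;>
        simp [Set.mem_union, Set.mem_image, List.cons.injEq]
    · have h1 : [false] ∉ insert [true] ((false :: ·) '' cl.1) := by
        rintro (h | h)
        · simp at h
        · exact hni false false cl.1 (fun q hq => (cl.2.1 q hq).1) h
      have h2 : [true] ∈ insert [true] ((false :: ·) '' cl.1) := Set.mem_insert _ _
      simp only [h1, h2, dif_neg, dif_pos, not_false_iff, Sum.inr.injEq, Sum.inl.injEq,
        Subtype.mk.injEq]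
      ext p
      simp [Set.mem_insert_iff, Set.mem_image, List.cons.injEq]
    · have h1 : [false] ∈ insert [false] ((true :: ·) '' cr.1) := Set.mem_insert _ _
      simp only [h1, dif_pos, Sum.inr.injEq, Subtype.mk.injEq]
      ext p
      simp [Set.mem_insert_iff, Set.mem_image, List.cons.injEq]

lemma cut_finite_card (T : BTree) :
    ∃ _ : Finite (Cut T), Nat.card (Cut T) = 2 ^ T.leafCount - 1 := by
  induction T with
  | leaf => exact ⟨inferInstance, by simp [Nat.card_unique, leafCount]⟩
  | node l r ihl ihr =>
      obtain ⟨hfl, hcl⟩ := ihl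
      obtain ⟨hfr, hcr⟩ := ihr
      have e := cutEquivNode l r
      have hf : Finite (Cut (node l r)) := Finite.of_equiv _ e.symm
      refine ⟨hf, ?_⟩
      have := Nat.card_eq_of_bijective e e.bijective
      rw [this, Nat.card_sum, Nat.card_sum, Nat.card_prod, hcl, hcr]
      have h1 : 1 ≤ 2 ^ l.leafCount := Nat.one_le_two_pow
      have h2 : 1 ≤ 2 ^ r.leafCount := Nat.one_le_two_pow
      have hmul : 2 ^ (node l r).leafCount = 2 ^ l.leafCount * 2 ^ r.leafCount := by
        simp [leafCount, pow_add]
      rw [hmul]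
      obtain ⟨u, hu⟩ : ∃ u, 2 ^ l.leafCount = u + 1 := ⟨2 ^ l.leafCount - 1, by omega⟩
      obtain ⟨v, hv⟩ : ∃ v, 2 ^ r.leafCount = v + 1 := ⟨2 ^ r.leafCount - 1, by omega⟩
      rw [hu, hv]
      have : (u + 1) * (v + 1) = u * v + u + v + 1 := by ring
      rw [this]
      simp only [Nat.add_sub_cancel]
      omega

instance : Unique (LeafPos leaf) where
  default := ⟨[], rfl⟩
  uniq := by
    rintro ⟨p, hp⟩
    apply Subtype.ext
    cases p with
    | nil => rfl
    | cons b q => simp at hp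

def leafPosEquivNode (l r : BTree) : LeafPos (node l r) ≃ LeafPos l ⊕ LeafPos r where
  toFun x :=
    match x with
    | ⟨[], h⟩ => absurd (Option.some.inj h) (by simp)
    | ⟨false :: q, h⟩ => Sum.inl ⟨q, by simpa using h⟩
    | ⟨true :: q, h⟩ => Sum.inr ⟨q, by simpa using h⟩
  invFun x :=
    match x with
    | Sum.inl ⟨q, h⟩ => ⟨false :: q, by simpa using h⟩
    | Sum.inr ⟨q, h⟩ => ⟨true :: q, by simpa using h⟩
  left_inv := by
    rintro ⟨p, hp⟩
    cases p with
    | nil => exact absurd (Option.some.inj hp) (by simp)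
    | cons b q => cases b <;> rfl
  right_inv := by rintro (⟨q, h⟩ | ⟨q, h⟩) <;> rfl

lemma leafPos_finite_card (T : BTree) :
    ∃ _ : Finite (LeafPos T), Nat.card (LeafPos T) = T.leafCount := by
  induction T with
  | leaf => exact ⟨inferInstance, by simp [Nat.card_unique, leafCount]⟩
  | node l r ihl ihr =>
      obtain ⟨hfl, hcl⟩ := ihl
      obtain ⟨hfr, hcr⟩ := ihr
      have e := leafPosEquivNode l r
      have hf : Finite (LeafPos (node l r)) := Finite.of_equiv _ e.symm
      refine ⟨hf, ?_⟩
      rw [Nat.card_eq_of_bijective e e.bijective, Nat.card_sum, hcl, hcr]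
      rfl

end BTree

open BTree in
/-- For a nonplanar full binary tree `T` with `n` leaves, the number of
binary-admissible cuts of `T` (including the empty cut, but not the total cut)
is `2^n - 1`; equivalently, the binary-admissible cuts together with one extra
element (the total cut, giving the term `T ⊗ 1` of the coproduct `Δ(T)`) are
in bijection with the subsets of the leaf set of `T`. -/
theorem binAdmissibleCut_count (T : BTree) (n : ℕ) (h : T.leafCount = n) :
    Nat.card {C : Set (List Bool) // IsBinAdmissibleCut T C} = 2 ^ n - 1 ∧
    Nonempty (({C : Set (List Bool) // IsBinAdmissibleCut T C} ⊕ PUnit) ≃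
      Set {p : List Bool // subtreeAt T p = some BTree.leaf}) := by
  subst h
  obtain ⟨hfc, hcc⟩ := cut_finite_card T
  obtain ⟨hfl, hcl⟩ := leafPos_finite_card T
  refine ⟨hcc, ?_⟩
  have hn1 : 1 ≤ 2 ^ T.leafCount := Nat.one_le_two_pow
  have hfS : Finite (Set (LeafPos T)) := by
    have := Fintype.ofFinite (LeafPos T)
    infer_instance
  have hfsum : Finite (Cut T ⊕ PUnit) := by infer_instance
  rw [← Finite.card_eq]
  have hft : Fintype (LeafPos T) := Fintype.ofFinite _
  have hS : Nat.card (Set (LeafPos T)) = 2 ^ T.leafCount := by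
    rw [Nat.card_eq_fintype_card, Fintype.card_set, ← Nat.card_eq_fintype_card, hcl]
  rw [hS, Nat.card_sum, hcc]
  simp [Nat.card_eq_fintype_card]
  omega
end

section
/- The edge-insertion product ⊲ on the vector space spanned by nonplanar binary rooted trees satisfies the right Vinberg (pre-Lie) identity: (T₁ ⊲ T₂) ⊲ T₃ − T₁ ⊲ (T₂ ⊲ T₃) = (T₁ ⊲ T₃) ⊲ T₂ − T₁ ⊲ (T₃ ⊲ T₂) for all binary trees T₁, T₂, T₃. -/
namespace BTree

/-- Isomorphism of rooted nonplanar binary trees (children unordered). -/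
inductive Iso : BTree → BTree → Prop
  | leaf : Iso leaf leaf
  | node {a b c d : BTree} : Iso a c → Iso b d → Iso (node a b) (node c d)
  | swap {a b c d : BTree} : Iso a d → Iso b c → Iso (node a b) (node c d)

/-- The list of all trees `T ⊲_e S` obtained by inserting `S` at an edge `e`
of `T`: subdivide `e` with a new vertex and attach the root of `S` to the new
vertex by a new edge. -/
def ins : BTree → BTree → List BTree
  | leaf, _ => []
  | node l r, S =>
      node (node l S) r :: node l (node r S) ::
        ((ins l S).map fun l' => node l' r) ++ ((ins r S).map fun r' => node l r')

end BTree

noncomputable section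

/-- The vector space with basis the (planar representatives of) binary trees. -/
abbrev W : Type := BTree →₀ ℚ

/-- Basis vector of a tree. -/
noncomputable def δ (t : BTree) : W := Finsupp.single t 1

/-- `T ⊲ S` on basis trees: the sum of all insertions of `S` at the edges of
`T`, plus the tree `M(T,S)` obtained by joining `T` and `S` to a new common
root. -/
noncomputable def treeIns (t s : BTree) : W :=
  ((BTree.ins t s).map δ).sum + δ (BTree.node t s)

/-- The bilinear extension of the edge-insertion product `⊲`. -/
noncomputable def insExt (x y : W) : W :=
  x.sum fun t a => y.sum fun s b => (a * b) • treeIns t s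

/-- The subspace identifying isomorphic (planar representatives of) trees;
`W ⧸ K` is the vector space spanned by nonplanar binary rooted trees. -/
noncomputable def K : Submodule ℚ W :=
  Submodule.span ℚ {x : W | ∃ t s : BTree, BTree.Iso t s ∧ x = δ t - δ s}


open BTree

-- ===== auxiliary lemmas =====

lemma list_sum_map_add {α : Type*} (l : List α) (f g : α → W) :
    (l.map fun x => f x + g x).sum = (l.map f).sum + (l.map g).sum := by
  induction l with
  | nil => simp
  | cons a t ih => simp [ih]; abel

lemma list_sum_map_zero {α : Type*} (l : List α) :
    (l.map fun _ => (0:W)).sum = 0 := by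
  induction l <;> simp [*]

lemma prod_comm_sum (L₁ L₂ : List BTree) :
    (L₁.map fun y => ((L₂.map fun w => δ (node w y)).sum)).sum
      = (L₂.map fun w => ((L₁.map fun y => δ (node w y)).sum)).sum := by
  induction L₁ with
  | nil => simp [list_sum_map_zero]
  | cons a t ih => simp [list_sum_map_add, ih]

/-- The sum of insertions of `s` at the edges of `t` (without the root join). -/
noncomputable def Ssum (t s : BTree) : W := ((ins t s).map δ).sum

lemma treeIns_eq (t s : BTree) : treeIns t s = Ssum t s + δ (node t s) := rfl

lemma Ssum_node (p q s : BTree) :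
    Ssum (node p q) s = δ (node (node p s) q) + δ (node p (node q s))
      + ((ins p s).map fun w => δ (node w q)).sum
      + ((ins q s).map fun w => δ (node p w)).sum := by
  simp [Ssum, ins, Function.comp_def]
  abel

/-- The "pure edge-insertion" associator-type expression. -/
noncomputable def Dd (t b c : BTree) : W :=
  ((ins t b).map fun u => Ssum u c).sum - ((ins b c).map fun v => Ssum t v).sum
    - Ssum t (node b c)

noncomputable def lift (g : BTree → BTree) : W →ₗ[ℚ] W := Finsupp.lmapDomain ℚ ℚ g

lemma lift_delta (g : BTree → BTree) (t : BTree) : lift g (δ t) = δ (g t) := by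
  simp [lift, δ, Finsupp.mapDomain_single]

lemma lift_Ssum (g : BTree → BTree) (t s : BTree) :
    lift g (Ssum t s) = ((ins t s).map fun w => δ (g w)).sum := by
  simp [Ssum, map_list_sum, List.map_map, Function.comp_def, lift_delta]

lemma lift_D (g : BTree → BTree) (t b c : BTree) :
    lift g (Dd t b c) =
      ((ins t b).map fun x => ((ins x c).map fun w => δ (g w)).sum).sum
      - ((ins b c).map fun v => ((ins t v).map fun w => δ (g w)).sum).sum
      - ((ins t (node b c)).map fun w => δ (g w)).sum := by
  simp [Dd, map_sub, map_list_sum, List.map_map, Function.comp_def, lift_Ssum]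

lemma D_node_sub (l r b c : BTree) :
    Dd (node l r) b c - Dd (node l r) c b
      = lift (fun x => node x r) (Dd l b c - Dd l c b)
        + lift (fun y => node l y) (Dd r b c - Dd r c b) := by
  rw [map_sub, map_sub, lift_D, lift_D, lift_D, lift_D]
  simp only [Dd, ins, List.map_cons, List.sum_cons, List.map_append, List.sum_append,
    List.map_map, Function.comp_def, Ssum_node, list_sum_map_add]
  rw [prod_comm_sum (ins r b) (ins l c), prod_comm_sum (ins r c) (ins l b)]
  abel

/-- The key combinatorial fact: `Dd t b c` is symmetric in `b`, `c`
(and in fact exactly, at the level of planar trees). -/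
lemma Dsym (t b c : BTree) : Dd t b c = Dd t c b := by
  induction t with
  | leaf => simp [Dd, Ssum, ins, list_sum_map_zero]
  | node l r ihl ihr =>
    have h := D_node_sub l r b c
    rw [ihl, ihr, sub_self, sub_self, map_zero, map_zero, add_zero] at h
    exact sub_eq_zero.mp h

lemma insExt_zero_left (y : W) : insExt 0 y = 0 := by simp [insExt]

lemma insExt_zero_right (x : W) : insExt x 0 = 0 := by simp [insExt]

lemma insExt_add_left (x x' y : W) : insExt (x + x') y = insExt x y + insExt x' y := by
  unfold insExt
  apply Finsupp.sum_add_index' <;> intro a <;> simp [add_mul, add_smul, Finsupp.sum_add]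

lemma insExt_add_right (x y y' : W) : insExt x (y + y') = insExt x y + insExt x y' := by
  unfold insExt
  rw [← Finsupp.sum_add]
  congr 1
  refine funext fun t => funext fun a => ?_
  apply Finsupp.sum_add_index' <;> intro s <;> simp [mul_add, add_smul]

lemma insExt_single_single (t s : BTree) : insExt (δ t) (δ s) = treeIns t s := by
  unfold insExt δ
  rw [Finsupp.sum_single_index, Finsupp.sum_single_index] <;> simp

lemma insExt_listSum_left (L : List BTree) (y : W) :
    insExt ((L.map δ).sum) y = (L.map fun t => insExt (δ t) y).sum := by
  induction L with
  | nil => simp [insExt_zero_left]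
  | cons a t ih => simp [insExt_add_left, ih]

lemma insExt_listSum_right (L : List BTree) (x : W) :
    insExt x ((L.map δ).sum) = (L.map fun s => insExt x (δ s)).sum := by
  induction L with
  | nil => simp [insExt_zero_right]
  | cons a t ih => simp [insExt_add_right, ih]

lemma expand1 (t b c : BTree) : insExt (insExt (δ t) (δ b)) (δ c)
    = ((ins t b).map fun u => treeIns u c).sum + treeIns (node t b) c := by
  rw [insExt_single_single]
  conv_lhs => rw [treeIns]
  rw [insExt_add_left, insExt_listSum_left]
  simp only [insExt_single_single]

lemma expand2 (t b c : BTree) : insExt (δ t) (insExt (δ b) (δ c))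
    = ((ins b c).map fun v => treeIns t v).sum + treeIns t (node b c) := by
  rw [insExt_single_single]
  conv_lhs => rw [treeIns]
  rw [insExt_add_right, insExt_listSum_right]
  simp only [insExt_single_single]

lemma Ekey (t b c : BTree) :
    (((ins t b).map fun u => treeIns u c).sum + treeIns (node t b) c)
      - (((ins b c).map fun v => treeIns t v).sum + treeIns t (node b c))
    = (((ins t c).map fun u => treeIns u b).sum + treeIns (node t c) b)
      - (((ins c b).map fun v => treeIns t v).sum + treeIns t (node c b)) := by
  have key : (((ins t b).map fun u => treeIns u c).sum + treeIns (node t b) c)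
      - (((ins b c).map fun v => treeIns t v).sum + treeIns t (node b c))
      - ((((ins t c).map fun u => treeIns u b).sum + treeIns (node t c) b)
      - (((ins c b).map fun v => treeIns t v).sum + treeIns t (node c b)))
      = Dd t b c - Dd t c b := by
    simp only [treeIns_eq, Dd, Ssum_node, list_sum_map_add]
    abel
  rw [Dsym, sub_self] at key
  exact sub_eq_zero.mp key

/-- The edge-insertion product `⊲` on the vector space spanned by nonplanar
binary rooted trees satisfies the right Vinberg (pre-Lie) identity
`(T₁ ⊲ T₂) ⊲ T₃ − T₁ ⊲ (T₂ ⊲ T₃) = (T₁ ⊲ T₃) ⊲ T₂ − T₁ ⊲ (T₃ ⊲ T₂)`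
for all binary trees `T₁, T₂, T₃` (the identity holds in the quotient
`W ⧸ K`, i.e. modulo the identification of isomorphic planar trees). -/
theorem edge_insertion_preLie (T₁ T₂ T₃ : BTree) :
    K.mkQ (insExt (insExt (δ T₁) (δ T₂)) (δ T₃) - insExt (δ T₁) (insExt (δ T₂) (δ T₃))) =
    K.mkQ (insExt (insExt (δ T₁) (δ T₃)) (δ T₂) - insExt (δ T₁) (insExt (δ T₃) (δ T₂))) := by
  have h : insExt (insExt (δ T₁) (δ T₂)) (δ T₃) - insExt (δ T₁) (insExt (δ T₂) (δ T₃))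
      = insExt (insExt (δ T₁) (δ T₃)) (δ T₂) - insExt (δ T₁) (insExt (δ T₃) (δ T₂)) := by
    rw [expand1, expand1, expand2, expand2]
    exact Ekey T₁ T₂ T₃
  rw [h]

end
end

section
/- For every unlabelled nonplanar binary tree T with k leaves, the coefficient of T in N^{k−1}(•) equals k!/s_T, where s_T is the number of automorphisms of T. Equivalently, the coefficient of T in the pre-Lie exponential W(•) = Σ_{k≥1} N^{k−1}(•)/k! is 1/s_T. -/
namespace BTree

/-- Decidable isomorphism of rooted nonplanar binary trees. -/
def isob : BTree → BTree → Bool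
  | leaf, leaf => true
  | node a b, node c d => (isob a c && isob b d) || (isob a d && isob b c)
  | _, _ => false

/-- Isomorphisms as data; `s_T = Nat.card (TIso T T)` = number of
root-preserving automorphisms of `T`. -/
inductive TIso : BTree → BTree → Type
  | leaf : TIso leaf leaf
  | node {a b c d : BTree} : TIso a c → TIso b d → TIso (node a b) (node c d)
  | swap {a b c d : BTree} : TIso a d → TIso b c → TIso (node a b) (node c d)

end BTree

noncomputable section

/-- The growth operator `N(T) = T ⊲ •`. -/
noncomputable def growth (x : W) : W := insExt x (δ BTree.leaf)

/-!
Write `x ⬝ y` for `nodeMul x y`, the bilinear extension of `(l, r) ↦ node l r`. A leaf inserted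
into `node l r` lands in `l`, in `r`, or on the new root edge, so
`N (x ⬝ y) = N x ⬝ y + x ⬝ N y + (x ⬝ y) ⬝ •`, and Pascal's rule turns this into
`N^{n+1}(•) = ∑_{i+j=n} C(n+1, i) N^i(•) ⬝ N^j(•)`. Since `N^i(•)` only involves trees with
`i + 1` leaves, the coefficient of `T = node A B` (with `i + 1` and `j + 1` leaves) sees only the
term `(i, j)` and, when `A ≇ B`, its mirror `(j, i)`. By induction these contribute
`(i+1) (i+j+1)! / (s_A s_B)` and `(j+1) (i+j+1)! / (s_A s_B)`, summing to `(i+j+2)! / s_T`; when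
`A ≅ B` only the first survives, `i = j`, and `s_T = 2 s_A s_B`.
-/

open BTree Finset
open scoped Nat

lemma Nat.add_succ_choose_mul_succ_factorial_mul_succ_factorial (i j : ℕ) :
    (i + j + 1).choose i * (i + 1)! * (j + 1)! = (i + 1) * (i + j + 1)! := by
  have h := Nat.add_choose_mul_factorial_mul_factorial i (j + 1)
  rw [← Nat.choose_symm_add, ← add_assoc] at h
  rw [Nat.factorial_succ, ← h]
  ring

lemma Finset.Nat.sum_antidiagonal_choose_succ_succ_nsmul {M : Type*} [AddCommMonoid M]
    (f : ℕ → ℕ → M) (n : ℕ) :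
    ∑ p ∈ antidiagonal (n + 1), (n + 2).choose p.1 • f p.1 p.2 =
      f (n + 1) 0 +
        ∑ p ∈ antidiagonal n, (n + 1).choose p.1 • (f (p.1 + 1) p.2 + f p.1 (p.2 + 1)) := by
  have h := Nat.sum_antidiagonal_succ (n := n) (f := fun p => (n + 1).choose p.1 • f p.1 p.2)
  rw [Nat.sum_antidiagonal_succ'] at h
  simp only [Nat.choose_zero_right, Nat.choose_self, one_smul] at h
  rw [Nat.sum_antidiagonal_succ]
  simp only [Nat.choose_succ_succ (n + 1), add_smul, smul_add, sum_add_distrib,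
    Nat.choose_zero_right, one_smul]
  rw [add_left_comm (f (n + 1) 0), h]
  abel

namespace BTree

lemma leafCount_pos (t : BTree) : 0 < t.leafCount := by
  induction t with
  | leaf => exact Nat.one_pos
  | node l r _ ihr => exact Nat.add_pos_right _ ihr

lemma isob_comm : ∀ s t : BTree, isob s t = isob t s
  | leaf, leaf | leaf, node _ _ | node _ _, leaf => rfl
  | node a b, node c d => by
    simp only [isob, isob_comm a, isob_comm b, Bool.and_comm (isob d a)]

lemma isob_trans : ∀ {s t u : BTree}, isob s t = true → isob t u = true → isob s u = true
  | leaf, leaf, leaf, _, _ => rfl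
  | node a b, node c d, node e f, hst, htu => by
    simp only [isob, Bool.or_eq_true, Bool.and_eq_true] at hst htu ⊢
    rcases hst with ⟨hac, hbd⟩ | ⟨had, hbc⟩ <;> rcases htu with ⟨hce, hdf⟩ | ⟨hcf, hde⟩
    · exact .inl ⟨isob_trans hac hce, isob_trans hbd hdf⟩
    · exact .inr ⟨isob_trans hac hcf, isob_trans hbd hde⟩
    · exact .inr ⟨isob_trans had hdf, isob_trans hbc hce⟩
    · exact .inl ⟨isob_trans had hde, isob_trans hbc hcf⟩

lemma isob_congr_right {s t u : BTree} (h : isob t u = true) : isob s t = isob s u :=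
  Bool.eq_iff_iff.mpr
    ⟨fun hst => isob_trans hst h, fun hsu => isob_trans hsu ((isob_comm u t).trans h)⟩

lemma leafCount_eq_of_isob : ∀ {s t : BTree}, isob s t = true → s.leafCount = t.leafCount
  | leaf, leaf, _ => rfl
  | node a b, node c d, h => by
    simp only [isob, Bool.or_eq_true, Bool.and_eq_true] at h
    rcases h with ⟨hac, hbd⟩ | ⟨had, hbc⟩
    · simp [leafCount, leafCount_eq_of_isob hac, leafCount_eq_of_isob hbd]
    · simp [leafCount, leafCount_eq_of_isob had, leafCount_eq_of_isob hbc, Nat.add_comm]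

lemma leafCount_of_mem_ins {t s u : BTree} (h : u ∈ t.ins s) :
    u.leafCount = t.leafCount + s.leafCount := by
  induction t generalizing u with
  | leaf => simp [ins] at h
  | node l r ihl ihr =>
    simp only [ins, List.mem_cons, List.mem_append, List.mem_map] at h
    rcases h with (rfl | rfl | ⟨l', hl', rfl⟩) | ⟨r', hr', rfl⟩
    · simp only [leafCount]; omega
    · simp only [leafCount]; omega
    · simp only [leafCount, ihl hl']; omega
    · simp only [leafCount, ihr hr']; omega

lemma TIso.isob_eq_true : ∀ {s t : BTree}, TIso s t → isob s t = true
  | _, _, .leaf => rfl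
  | _, _, .node f g => by simp [isob, isob_eq_true f, isob_eq_true g]
  | _, _, .swap f g => by simp [isob, isob_eq_true f, isob_eq_true g]

def TIso.nodeEquiv (a b c d : BTree) :
    TIso (.node a b) (.node c d) ≃ (TIso a c × TIso b d) ⊕ (TIso a d × TIso b c) where
  toFun
    | .node f g => .inl (f, g)
    | .swap f g => .inr (f, g)
  invFun
    | .inl (f, g) => .node f g
    | .inr (f, g) => .swap f g
  left_inv f := by cases f <;> rfl
  right_inv f := by rcases f with ⟨f, g⟩ | ⟨f, g⟩ <;> rfl

instance TIso.uniqueLeaf : Unique (TIso .leaf .leaf) where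
  default := .leaf
  uniq := fun .leaf => rfl

instance TIso.finite : ∀ s t : BTree, Finite (TIso s t)
  | .leaf, .leaf => inferInstance
  | .leaf, .node _ _ | .node _ _, .leaf => @Finite.of_subsingleton _ ⟨fun f => nomatch f⟩
  | .node a b, .node c d =>
    have := finite a c; have := finite b d; have := finite a d; have := finite b c
    .of_equiv _ (nodeEquiv a b c d).symm

lemma TIso.isEmpty {s t : BTree} (h : isob s t = false) : IsEmpty (TIso s t) :=
  ⟨fun f => by simp [f.isob_eq_true] at h⟩

lemma card_tiso_eq_zero {s t : BTree} (h : isob s t = false) : Nat.card (TIso s t) = 0 :=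
  have := TIso.isEmpty h
  Nat.card_of_isEmpty

lemma card_tiso_node (a b c d : BTree) :
    Nat.card (TIso (node a b) (node c d)) =
      Nat.card (TIso a c) * Nat.card (TIso b d) + Nat.card (TIso a d) * Nat.card (TIso b c) := by
  rw [Nat.card_congr (TIso.nodeEquiv a b c d), Nat.card_sum, Nat.card_prod, Nat.card_prod]

lemma card_tiso_congr_right :
    ∀ {s t u : BTree}, isob t u = true → Nat.card (TIso s t) = Nat.card (TIso s u)
  | _, leaf, leaf, _ => rfl
  | leaf, node _ _, node _ _, _ => by rw [card_tiso_eq_zero rfl, card_tiso_eq_zero rfl]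
  | node a b, node c d, node e f, h => by
    simp only [isob, Bool.or_eq_true, Bool.and_eq_true] at h
    simp only [card_tiso_node]
    rcases h with ⟨hce, hdf⟩ | ⟨hcf, hde⟩
    · rw [card_tiso_congr_right (s := a) hce, card_tiso_congr_right (s := b) hdf,
        card_tiso_congr_right (s := a) hdf, card_tiso_congr_right (s := b) hce]
    · rw [card_tiso_congr_right (s := a) hcf, card_tiso_congr_right (s := b) hde,
        card_tiso_congr_right (s := a) hde, card_tiso_congr_right (s := b) hcf, add_comm]

lemma card_tiso_node_self (A B : BTree) :
    Nat.card (TIso (node A B) (node A B)) =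
      (if isob A B then 2 else 1) * Nat.card (TIso A A) * Nat.card (TIso B B) := by
  rw [card_tiso_node]
  split_ifs with h
  · rw [card_tiso_congr_right (s := A) ((isob_comm B A).trans h),
      card_tiso_congr_right (s := B) h]
    ring
  · rw [card_tiso_eq_zero (Bool.of_not_eq_true h)]
    ring

end BTree

def isoCoeff (T : BTree) : W →ₗ[ℚ] ℚ :=
  Finsupp.linearCombination ℚ fun t => if isob t T then 1 else 0

def nodeMul : W →ₗ[ℚ] W →ₗ[ℚ] W :=
  Finsupp.linearCombination ℚ fun l => Finsupp.lmapDomain ℚ ℚ (node l)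

def growthₗ : W →ₗ[ℚ] W :=
  Finsupp.linearCombination ℚ fun t => treeIns t leaf

lemma isoCoeff_apply (T : BTree) (x : W) :
    isoCoeff T x = x.sum fun t a => if isob t T then a else 0 := by
  simp [isoCoeff, Finsupp.linearCombination_apply]

lemma isoCoeff_δ (T t : BTree) : isoCoeff T (δ t) = if isob t T then 1 else 0 := by
  simp [isoCoeff, δ]

lemma nodeMul_δ_δ (l r : BTree) : nodeMul (δ l) (δ r) = δ (node l r) := by
  simp [nodeMul, δ]

lemma growthₗ_apply (x : W) : growthₗ x = growth x := by
  simp [growthₗ, growth, insExt, δ, Finsupp.linearCombination_apply]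

lemma growthₗ_δ (t : BTree) : growthₗ (δ t) = treeIns t leaf := by
  simp [growthₗ, δ]

lemma bilin_ext_δ {M : Type*} [AddCommMonoid M] [Module ℚ M] {f g : W →ₗ[ℚ] W →ₗ[ℚ] M}
    (h : ∀ l r, f (δ l) (δ r) = g (δ l) (δ r)) : f = g :=
  Finsupp.lhom_ext' fun l => LinearMap.ext_ring <|
    Finsupp.lhom_ext' fun r => LinearMap.ext_ring (h l r)

lemma treeIns_node_leaf (l r : BTree) :
    treeIns (node l r) leaf = nodeMul (treeIns l leaf) (δ r) + nodeMul (δ l) (treeIns r leaf)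
      + δ (node (node l r) leaf) := by
  rw [← nodeMul.flip_apply (treeIns l leaf) (δ r)]
  simp only [treeIns, ins, List.cons_append, List.map_cons, List.map_append, List.map_map,
    Function.comp_def, List.sum_cons, List.sum_append, map_add, map_list_sum, add_left_inj]
  simp only [LinearMap.flip_apply, nodeMul_δ_δ]
  abel

lemma growth_nodeMul (x y : W) :
    growth (nodeMul x y) =
      nodeMul (growth x) y + nodeMul x (growth y) + nodeMul (nodeMul x y) (δ leaf) := by
  simp only [← growthₗ_apply]
  have key : nodeMul.compr₂ growthₗ = nodeMul ∘ₗ growthₗ + nodeMul.compl₂ growthₗ +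
      nodeMul.compr₂ (nodeMul.flip (δ leaf)) := by
    refine bilin_ext_δ fun l r => ?_
    change growthₗ (nodeMul (δ l) (δ r)) = nodeMul (growthₗ (δ l)) (δ r) +
      nodeMul (δ l) (growthₗ (δ r)) + nodeMul (nodeMul (δ l) (δ r)) (δ leaf)
    rw [nodeMul_δ_δ, nodeMul_δ_δ, growthₗ_δ, growthₗ_δ, growthₗ_δ, treeIns_node_leaf]
  simpa using LinearMap.congr_fun₂ key x y

theorem iterate_growth_succ (n : ℕ) :
    growth^[n + 1] (δ leaf) =
      ∑ p ∈ antidiagonal n, (n + 1).choose p.1 •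
        nodeMul (growth^[p.1] (δ leaf)) (growth^[p.2] (δ leaf)) := by
  induction n with
  | zero =>
    simp [← growthₗ_apply, growthₗ_δ, treeIns, ins, nodeMul_δ_δ]
  | succ n ih =>
    have hroot : ∑ p ∈ antidiagonal n, (n + 1).choose p.1 •
        nodeMul (nodeMul (growth^[p.1] (δ leaf)) (growth^[p.2] (δ leaf))) (δ leaf) =
        nodeMul (growth^[n + 1] (δ leaf)) (growth^[0] (δ leaf)) := by
      rw [ih, ← nodeMul.flip_apply]
      simp only [map_sum, map_nsmul, LinearMap.flip_apply, Function.iterate_zero_apply]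
    rw [Function.iterate_succ_apply', ih, ← growthₗ_apply, map_sum,
      Finset.Nat.sum_antidiagonal_choose_succ_succ_nsmul
        (fun i j => nodeMul (growth^[i] (δ leaf)) (growth^[j] (δ leaf)))]
    simp only [map_nsmul, growthₗ_apply, growth_nodeMul, smul_add, sum_add_distrib, hroot,
      ← Function.iterate_succ_apply' growth]
    abel

def homogeneous (k : ℕ) : Submodule ℚ W :=
  Finsupp.supported ℚ ℚ {t | t.leafCount = k}

lemma δ_mem_homogeneous (t : BTree) : δ t ∈ homogeneous t.leafCount :=
  Finsupp.single_mem_supported ℚ _ rfl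

lemma treeIns_mem_homogeneous (t s : BTree) :
    treeIns t s ∈ homogeneous (t.leafCount + s.leafCount) := by
  refine add_mem (list_sum_mem fun x hx => ?_) (δ_mem_homogeneous _)
  obtain ⟨u, hu, rfl⟩ := List.mem_map.mp hx
  exact leafCount_of_mem_ins hu ▸ δ_mem_homogeneous u

lemma growth_mem_homogeneous {x : W} {k : ℕ} (hx : x ∈ homogeneous k) :
    growth x ∈ homogeneous (k + 1) := by
  rw [← growthₗ_apply, growthₗ, Finsupp.linearCombination_apply]
  refine Submodule.finsuppSum_mem _ _ _ _ fun t ht => Submodule.smul_mem _ _ ?_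
  rw [← (Finsupp.mem_supported _ x).mp hx (Finsupp.mem_support_iff.mpr ht)]
  exact treeIns_mem_homogeneous t leaf

lemma iterate_growth_mem_homogeneous (n : ℕ) : growth^[n] (δ leaf) ∈ homogeneous (n + 1) := by
  induction n with
  | zero => exact δ_mem_homogeneous leaf
  | succ n ih => exact Function.iterate_succ_apply' growth n _ ▸ growth_mem_homogeneous ih

lemma isoCoeff_eq_zero_of_mem_homogeneous {T : BTree} {x : W} {k : ℕ} (hx : x ∈ homogeneous k)
    (hk : T.leafCount ≠ k) : isoCoeff T x = 0 := by
  rw [isoCoeff_apply]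
  refine Finset.sum_eq_zero fun t ht => if_neg fun h => hk ?_
  rw [← leafCount_eq_of_isob h]
  exact (Finsupp.mem_supported _ x).mp hx ht

lemma isoCoeff_node_δ_node (A B l r : BTree) :
    isoCoeff (node A B) (δ (node l r)) = isoCoeff A (δ l) * isoCoeff B (δ r) +
      if isob A B then 0 else isoCoeff B (δ l) * isoCoeff A (δ r) := by
  simp only [isoCoeff_δ, isob]
  by_cases hAB : isob A B
  · simp only [isob_congr_right (s := l) hAB, isob_congr_right (s := r) hAB]
    by_cases isob l B <;> by_cases isob r B <;> simp_all
  · have hl : isob l A = true → isob l B = true → False :=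
      fun h h' => hAB (isob_trans ((isob_comm A l).trans h) h')
    have hr : isob r A = true → isob r B = true → False :=
      fun h h' => hAB (isob_trans ((isob_comm A r).trans h) h')
    by_cases isob l A <;> by_cases isob r B <;> by_cases isob l B <;> by_cases isob r A <;>
      simp_all

lemma isoCoeff_node_nodeMul (A B : BTree) (x y : W) :
    isoCoeff (node A B) (nodeMul x y) = isoCoeff A x * isoCoeff B y +
      if isob A B then 0 else isoCoeff B x * isoCoeff A y := by
  have key : nodeMul.compr₂ (isoCoeff (node A B)) =
      (LinearMap.mul ℚ ℚ).compl₁₂ (isoCoeff A) (isoCoeff B) +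
        if isob A B then 0 else (LinearMap.mul ℚ ℚ).compl₁₂ (isoCoeff B) (isoCoeff A) := by
    refine bilin_ext_δ fun l r => ?_
    change isoCoeff (node A B) (nodeMul (δ l) (δ r)) = _
    rw [nodeMul_δ_δ, isoCoeff_node_δ_node]
    split_ifs <;> rfl
  have := LinearMap.congr_fun₂ key x y
  split_ifs at this ⊢ <;> simpa using this

lemma sum_antidiagonal_choose_mul_isoCoeff {A B : BTree} {i j n : ℕ} {a b : ℚ} (hn : i + j = n)
    (hA : A.leafCount = i + 1)
    (hAi : isoCoeff A (growth^[i] (δ leaf)) = (i + 1)! / a)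
    (hBj : isoCoeff B (growth^[j] (δ leaf)) = (j + 1)! / b) :
    ∑ p ∈ antidiagonal n, ((n + 1).choose p.1 : ℚ) *
        (isoCoeff A (growth^[p.1] (δ leaf)) * isoCoeff B (growth^[p.2] (δ leaf))) =
      (i + 1) * (n + 1)! / (a * b) := by
  subst hn
  rw [sum_eq_single_of_mem (i, j) (mem_antidiagonal.mpr rfl)]
  · have h := Nat.add_succ_choose_mul_succ_factorial_mul_succ_factorial i j
    rw [hAi, hBj]
    calc _ = ((i + j + 1).choose i * (i + 1)! * (j + 1)! : ℕ) / (a * b) := by push_cast; ring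
      _ = _ := by rw [h]; push_cast; ring
  · intro p hp hne
    have hpi : p.1 ≠ i := fun h =>
      hne (Prod.ext h (by rw [HasAntidiagonal.mem_antidiagonal] at hp; omega))
    rw [isoCoeff_eq_zero_of_mem_homogeneous (iterate_growth_mem_homogeneous p.1) (by omega),
      zero_mul, mul_zero]

theorem isoCoeff_iterate_growth : ∀ (T : BTree) (n : ℕ), T.leafCount = n + 1 →
    isoCoeff T (growth^[n] (δ leaf)) = (n + 1)! / Nat.card (TIso T T)
  | leaf, n, h => by
    obtain rfl : n = 0 := by simpa [leafCount] using h.symm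
    simp [isoCoeff_δ, isob]
  | node A B, n, h => by
    obtain ⟨i, hA⟩ := Nat.exists_eq_add_one.mpr (leafCount_pos A)
    obtain ⟨j, hB⟩ := Nat.exists_eq_add_one.mpr (leafCount_pos B)
    obtain rfl : n = i + j + 1 := by simp only [leafCount] at h; omega
    have hAi := isoCoeff_iterate_growth A i hA
    have hBj := isoCoeff_iterate_growth B j hB
    rw [iterate_growth_succ, map_sum, card_tiso_node_self, Nat.factorial_succ]
    simp only [map_nsmul, isoCoeff_node_nodeMul, nsmul_eq_mul]
    cases hAB : isob A B with
    | true =>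
      obtain rfl : i = j := by have := leafCount_eq_of_isob hAB; omega
      simp only [if_true, add_zero]
      rw [sum_antidiagonal_choose_mul_isoCoeff rfl hA hAi hBj]
      push_cast
      ring
    | false =>
      simp only [Bool.false_eq_true, if_false, mul_add, sum_add_distrib]
      rw [sum_antidiagonal_choose_mul_isoCoeff rfl hA hAi hBj,
        sum_antidiagonal_choose_mul_isoCoeff (add_comm j i) hB hBj hAi]
      push_cast
      ring

/-- For every unlabelled nonplanar binary tree `T` with `k` leaves, the
coefficient of `T` in `N^{k−1}(•)` (the sum of the coefficients of all planar
representatives isomorphic to `T`) equals `k!/s_T`; equivalently, the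
coefficient of `T` in the pre-Lie exponential `W(•) = Σ_{k≥1} N^{k−1}(•)/k!`
is `1/s_T`. -/
theorem growth_iterate_coeff (T : BTree) (k : ℕ) (hk : 1 ≤ k)
    (h : T.leafCount = k) :
    (growth^[k - 1] (δ BTree.leaf)).sum
        (fun t a => if BTree.isob t T then a else 0) =
      (k.factorial : ℚ) / (Nat.card (BTree.TIso T T) : ℚ) := by
  obtain ⟨n, rfl⟩ := Nat.exists_eq_add_one.mpr hk
  rw [Nat.add_sub_cancel, ← isoCoeff_apply]
  exact isoCoeff_iterate_growth T n h

end
end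

section
/- In the Hopf algebra H of binary forests graded by number of leaves, the antipode satisfies: every term in S(T) is a forest arising from a binary-total cut of T, the sign of its coefficient is (−1)^{(number of trees in the forest)}, and the sum of the absolute values of the coefficients in S(T) equals 3^{n−1} for a tree T with n leaves. -/
namespace BTree

/-- Positions of the leaves of a tree. -/
def leafPos : BTree → List (List Bool)
  | leaf => [[]]
  | node l r => (leafPos l).map (List.cons false) ++ (leafPos r).map (List.cons true)

/-- The pruned forest `F_A` of the cut given by the leaf subset `A = {ℓ | p ℓ}`. -/
def maxSub (p : List Bool → Bool) : BTree → List Bool → List BTree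
  | leaf, q => if p q then [leaf] else []
  | node l r, q =>
      if (leafPos (node l r)).all (fun s => p (q ++ s)) then [node l r]
      else maxSub p l (q ++ [false]) ++ maxSub p r (q ++ [true])

/-- The remainder `T/A`, contracted back to a full binary tree. -/
def quotA (p : List Bool → Bool) : BTree → List Bool → Option BTree
  | leaf, q => if p q then none else some leaf
  | node l r, q =>
      match quotA p l (q ++ [false]), quotA p r (q ++ [true]) with
      | some l', some r' => some (node l' r')
      | some l', none => some l'
      | none, some r' => some r'
      | none, none => none

/-- All binary-total cuts of a tree, enumerated by choosing at each internal
vertex to cut the left child-edge, the right child-edge, or neither; each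
entry is (root component after contraction, multiset of severed pieces after
contraction). -/
def tc : BTree → List (BTree × Multiset BTree)
  | leaf => [(leaf, 0)]
  | node l r =>
      (tc l).flatMap fun pl => (tc r).flatMap fun pr =>
        [(node pl.1 pr.1, pl.2 + pr.2),
         (pr.1, pl.1 ::ₘ (pl.2 + pr.2)),
         (pl.1, pr.1 ::ₘ (pl.2 + pr.2))]

end BTree

noncomputable section

/-- The Hopf algebra `H` of binary forests: polynomial algebra on binary trees. -/
abbrev V : Type := AddMonoidAlgebra ℚ (Multiset BTree)

noncomputable def fδ (m : Multiset BTree) : V := AddMonoidAlgebra.ofCoeff (Finsupp.single m 1)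

def optForest : Option BTree → Multiset BTree
  | none => 0
  | some t => {t}

theorem List.sum_map_mul_sum_map {α β R : Type*} [NonUnitalNonAssocSemiring R]
    (L : List α) (K : List β) (f : α → R) (g : β → R) :
    (L.map f).sum * (K.map g).sum = (L.map fun a => (K.map fun b => f a * g b).sum).sum := by
  rw [← List.sum_map_mul_right]
  simp only [← List.sum_map_mul_left]

namespace BTree

theorem Iso.refl (T : BTree) : Iso T T := by
  induction T with
  | leaf => exact .leaf
  | node _ _ ihl ihr => exact .node ihl ihr

theorem leafCount_pos_s14 : ∀ T : BTree, 0 < T.leafCount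
  | leaf => Nat.one_pos
  | node l _ => Nat.add_pos_left (leafCount_pos_s14 l) _

theorem leafPos_ne_nil (T : BTree) : leafPos T ≠ [] := by
  induction T <;> simp_all [leafPos]

theorem length_tc (T : BTree) : (tc T).length = 3 ^ (T.leafCount - 1) := by
  induction T with
  | leaf => rfl
  | node l r ihl ihr =>
    have hl := leafCount_pos_s14 l
    have hr := leafCount_pos_s14 r
    simp only [tc, List.length_flatMap, List.length_cons, List.length_nil, List.map_const',
      List.sum_replicate, smul_eq_mul, ihl, ihr, leafCount]
    rw [show l.leafCount + r.leafCount - 1 = (l.leafCount - 1) + (r.leafCount - 1) + 1 by omega,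
      pow_succ, pow_add]
    ring

theorem maxSub_append (p : List Bool → Bool) (X : BTree) (q₀ q : List Bool) :
    maxSub p X (q₀ ++ q) = maxSub (fun s => p (q₀ ++ s)) X q := by
  induction X generalizing q with
  | leaf => simp [maxSub]
  | node l r ihl ihr => simp [maxSub, ← ihl, ← ihr]

theorem quotA_append (p : List Bool → Bool) (X : BTree) (q₀ q : List Bool) :
    quotA p X (q₀ ++ q) = quotA (fun s => p (q₀ ++ s)) X q := by
  induction X generalizing q with
  | leaf => simp [quotA]
  | node l r ihl ihr => simp [quotA, ← ihl, ← ihr]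

section

variable {p : List Bool → Bool}

theorem maxSub_of_forall_true {X : BTree} {q : List Bool} (h : ∀ s ∈ leafPos X, p (q ++ s)) :
    maxSub p X q = [X] := by
  cases X with
  | leaf => simpa [maxSub] using h [] (by simp [leafPos])
  | node l r => rw [maxSub, if_pos (List.all_eq_true.2 h)]

theorem maxSub_of_forall_false {X : BTree} {q : List Bool}
    (h : ∀ s ∈ leafPos X, p (q ++ s) = false) : maxSub p X q = [] := by
  induction X generalizing q with
  | leaf => simpa [maxSub] using h [] (by simp [leafPos])
  | node l r ihl ihr =>
    have hall : ¬ (leafPos (node l r)).all (fun s => p (q ++ s)) := by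
      obtain ⟨s, hs⟩ := List.exists_mem_of_ne_nil _ (leafPos_ne_nil (node l r))
      simpa using ⟨s, hs, h s hs⟩
    rw [maxSub, if_neg hall, ihl, ihr, List.append_nil] <;> intro s hs <;>
      simpa using h _ (by simp [leafPos, hs])

theorem quotA_of_forall_true {X : BTree} {q : List Bool} (h : ∀ s ∈ leafPos X, p (q ++ s)) :
    quotA p X q = none := by
  induction X generalizing q with
  | leaf => simpa [quotA] using h [] (by simp [leafPos])
  | node l r ihl ihr =>
    rw [quotA, ihl, ihr] <;> intro s hs <;> simpa using h _ (by simp [leafPos, hs])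

theorem quotA_of_forall_false {X : BTree} {q : List Bool}
    (h : ∀ s ∈ leafPos X, p (q ++ s) = false) : quotA p X q = some X := by
  induction X generalizing q with
  | leaf => simpa [quotA] using h [] (by simp [leafPos])
  | node l r ihl ihr =>
    rw [quotA, ihl, ihr] <;> intro s hs <;> simpa using h _ (by simp [leafPos, hs])

end

def joinPos (B C : Finset (List Bool)) : Finset (List Bool) :=
  B.image (List.cons false) ∪ C.image (List.cons true)

@[simp] theorem cons_false_mem_joinPos {B C : Finset (List Bool)} {s : List Bool} :
    false :: s ∈ joinPos B C ↔ s ∈ B := by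
  simp [joinPos]

@[simp] theorem cons_true_mem_joinPos {B C : Finset (List Bool)} {s : List Bool} :
    true :: s ∈ joinPos B C ↔ s ∈ C := by
  simp [joinPos]

theorem toFinset_leafPos_node (l r : BTree) :
    (leafPos (node l r)).toFinset = joinPos (leafPos l).toFinset (leafPos r).toFinset := by
  ext s
  simp [leafPos, joinPos]

theorem joinPos_filter {s t A : Finset (List Bool)} (hA : A ⊆ joinPos s t) :
    joinPos (s.filter (false :: · ∈ A)) (t.filter (true :: · ∈ A)) = A := by
  ext x
  constructor
  · simp only [joinPos, Finset.mem_union, Finset.mem_image, Finset.mem_filter]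
    rintro (⟨y, ⟨-, hy⟩, rfl⟩ | ⟨y, ⟨-, hy⟩, rfl⟩) <;> exact hy
  · intro hx
    have := hA hx
    simp only [joinPos, Finset.mem_union, Finset.mem_image] at this
    rcases this with ⟨y, hy, rfl⟩ | ⟨y, hy, rfl⟩ <;> simp [hy, hx]

theorem filter_joinPos {s t B C : Finset (List Bool)} (hB : B ⊆ s) (hC : C ⊆ t) :
    (s.filter (false :: · ∈ joinPos B C), t.filter (true :: · ∈ joinPos B C)) = (B, C) := by
  simp only [cons_false_mem_joinPos, cons_true_mem_joinPos, Prod.mk.injEq]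
  exact ⟨Finset.filter_mem_eq_inter.trans (Finset.inter_eq_right.2 hB),
    Finset.filter_mem_eq_inter.trans (Finset.inter_eq_right.2 hC)⟩

theorem sum_powerset_joinPos {M : Type*} [AddCommMonoid M] (s t : Finset (List Bool))
    (f : Finset (List Bool) → M) :
    ∑ A ∈ (joinPos s t).powerset, f A =
      ∑ BC ∈ s.powerset ×ˢ t.powerset, f (joinPos BC.1 BC.2) := by
  refine Finset.sum_nbij' (fun A => (s.filter (false :: · ∈ A), t.filter (true :: · ∈ A)))
    (fun BC => joinPos BC.1 BC.2) ?_ ?_ ?_ ?_ ?_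
  · intro A _
    simp [Finset.filter_subset]
  · rintro ⟨B, C⟩ h
    simp only [Finset.mem_product, Finset.mem_powerset] at h ⊢
    exact Finset.union_subset_union (Finset.image_subset_image h.1) (Finset.image_subset_image h.2)
  · intro A hA
    exact joinPos_filter (Finset.mem_powerset.1 hA)
  · rintro ⟨B, C⟩ h
    simp only [Finset.mem_product, Finset.mem_powerset] at h
    exact filter_joinPos h.1 h.2
  · intro A hA
    rw [joinPos_filter (Finset.mem_powerset.1 hA)]

/- `BTree` is the free magma on one generator, so `WithOne BTree`, which is `Option BTree` as
returned by `quotA`, is the free unital magma; `1 = none` is the empty remainder. -/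
instance : Mul BTree := ⟨node⟩

theorem quotA_node (p : List Bool → Bool) (l r : BTree) (q : List Bool) :
    quotA p (node l r) q =
      Option.merge node (quotA p l (q ++ [false])) (quotA p r (q ++ [true])) := by
  rw [quotA]
  cases quotA p l (q ++ [false]) <;> cases quotA p r (q ++ [true]) <;> rfl

def remainder (A : Finset (List Bool)) (T : BTree) : WithOne BTree := quotA (· ∈ A) T []

def prunedForest (A : Finset (List Bool)) (T : BTree) : List BTree := maxSub (· ∈ A) T []

theorem remainder_node_joinPos (B C : Finset (List Bool)) (l r : BTree) :
    remainder (joinPos B C) (node l r) = remainder B l * remainder C r := by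
  rw [remainder, quotA_node, List.nil_append, List.nil_append, ← List.append_nil [false],
    ← List.append_nil [true], quotA_append, quotA_append]
  simp only [List.singleton_append, cons_false_mem_joinPos, cons_true_mem_joinPos]
  rfl

theorem prunedForest_node_joinPos {B C : Finset (List Bool)} {l r : BTree}
    (hB : B ⊆ (leafPos l).toFinset) (hC : C ⊆ (leafPos r).toFinset) :
    prunedForest (joinPos B C) (node l r) =
      if B = (leafPos l).toFinset ∧ C = (leafPos r).toFinset then [node l r]
      else prunedForest B l ++ prunedForest C r := by
  have hall : ((leafPos (node l r)).all fun s => decide (s ∈ joinPos B C)) ↔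
      B = (leafPos l).toFinset ∧ C = (leafPos r).toFinset := by
    rw [Finset.Subset.antisymm_iff, Finset.Subset.antisymm_iff]
    simp [leafPos, Finset.subset_iff, hB, hC]
  rw [prunedForest, maxSub]
  simp only [List.nil_append, hall]
  rw [← List.append_nil [false], ← List.append_nil [true], maxSub_append, maxSub_append]
  simp [prunedForest]

theorem leafCount_le_of_mem_maxSub {p : List Bool → Bool} {X t : BTree} {q : List Bool}
    (ht : t ∈ maxSub p X q) : t.leafCount ≤ X.leafCount := by
  induction X generalizing q with
  | leaf => simp only [maxSub] at ht; split_ifs at ht <;> simp_all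
  | node l r ihl ihr =>
    rw [maxSub] at ht
    split_ifs at ht
    · simp_all
    · rcases List.mem_append.1 ht with h | h
      · exact (ihl h).trans (by simp [leafCount])
      · exact (ihr h).trans (by simp [leafCount])

theorem leafCount_lt_of_mem_maxSub {p : List Bool → Bool} {X t : BTree} {q : List Bool}
    (hX : ∃ s ∈ leafPos X, p (q ++ s) = false) (ht : t ∈ maxSub p X q) :
    t.leafCount < X.leafCount := by
  obtain ⟨s, hs, hps⟩ := hX
  cases X with
  | leaf => simp_all [maxSub, leafPos]
  | node l r =>
    have hall : ¬ (leafPos (node l r)).all (fun s => p (q ++ s)) := by simpa using ⟨s, hs, hps⟩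
    rw [maxSub, if_neg hall] at ht
    rcases List.mem_append.1 ht with h | h
    · exact (leafCount_le_of_mem_maxSub h).trans_lt (by simp [leafCount, leafCount_pos_s14])
    · exact (leafCount_le_of_mem_maxSub h).trans_lt (by simp [leafCount, leafCount_pos_s14])

open MonoidAlgebra

@[simp] theorem fδ_zero : fδ 0 = 1 := rfl

theorem fδ_add (a b : Multiset BTree) : fδ (a + b) = fδ a * fδ b := by
  simp [fδ, AddMonoidAlgebra.ofCoeff_single, AddMonoidAlgebra.single_mul_single]

theorem fδ_coe (L : List BTree) : fδ ↑L = (L.map fun t => fδ {t}).prod := by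
  induction L with
  | nil => rfl
  | cons t L ih => rw [List.map_cons, List.prod_cons, ← ih, ← fδ_add, Multiset.singleton_add,
      Multiset.cons_coe]

@[simp] theorem mul_eq_node (a b : BTree) : a * b = node a b := rfl

def cutForests (T : BTree) : List (Multiset BTree) := (tc T).map fun pc => pc.1 ::ₘ pc.2

def totalCutSum (T : BTree) : V :=
  ((cutForests T).map fun m => (-1 : ℚ) ^ Multiset.card m • fδ m).sum

def rootedCutSum (T : BTree) : MonoidAlgebra V (WithOne BTree) :=
  ((tc T).map fun pc =>
    single (pc.1 : WithOne BTree) ((-1 : ℚ) ^ Multiset.card pc.2 • fδ pc.2)).sum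

theorem rootedCutSum_node (l r : BTree) :
    rootedCutSum (node l r) = rootedCutSum l * rootedCutSum r +
      single 1 (totalCutSum l) * rootedCutSum r + rootedCutSum l * single 1 (totalCutSum r) := by
  have hsingle : ∀ T, single (1 : WithOne BTree) (totalCutSum T) = ((tc T).map fun pc =>
      single 1 ((-1 : ℚ) ^ Multiset.card (pc.1 ::ₘ pc.2) • fδ (pc.1 ::ₘ pc.2))).sum :=
    fun T => by rw [totalCutSum, cutForests, List.map_map, ← singleAddHom_apply, map_list_sum,
      List.map_map]; rfl
  simp only [hsingle, rootedCutSum, tc, List.flatMap_def, List.map_flatten, List.sum_flatten,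
    List.map_map, Function.comp_def, List.sum_map_mul_sum_map, ← List.sum_map_add]
  congr 1; refine List.map_congr_left fun ⟨a, m⟩ _ => ?_
  congr 1; refine List.map_congr_left fun ⟨b, k⟩ _ => ?_
  simp only [List.map_cons, List.map_nil, List.sum_cons, List.sum_nil, add_zero,
    single_mul_single, one_mul, mul_one, ← WithOne.coe_mul, mul_eq_node, smul_mul_smul_comm,
    ← fδ_add, Multiset.cons_add, Multiset.add_cons, Multiset.card_cons, Multiset.card_add,
    pow_succ, pow_add]
  rw [add_assoc]
  congr 4 <;> ring

theorem prunedForest_full (X : BTree) : prunedForest (leafPos X).toFinset X = [X] :=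
  maxSub_of_forall_true (by simp)

theorem remainder_full (X : BTree) : remainder (leafPos X).toFinset X = 1 :=
  quotA_of_forall_true (by simp)

theorem prunedForest_empty (X : BTree) : prunedForest ∅ X = [] :=
  maxSub_of_forall_false (by simp)

theorem remainder_empty (X : BTree) : remainder ∅ X = X :=
  quotA_of_forall_false (by simp)

/-- `Σ_A S(F_A) ⊗ T/A` with `totalCutSum` in place of `S`. Keeping `T/A` in the magma instead of
multiplying it into `V` makes this multiplicative along `node`, up to the term of the full cut. -/
def keyedCoproduct (T : BTree) : MonoidAlgebra V (WithOne BTree) :=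
  ∑ A ∈ (leafPos T).toFinset.powerset,
    single (remainder A T) ((prunedForest A T).map totalCutSum).prod

theorem keyedCoproduct_node (l r : BTree) :
    keyedCoproduct (node l r) = keyedCoproduct l * keyedCoproduct r +
      (single 1 (totalCutSum (node l r)) -
        single 1 (totalCutSum l) * single 1 (totalCutSum r)) := by
  classical
  set full := ((leafPos l).toFinset, (leafPos r).toFinset)
  have hterm : ∀ BC ∈ (leafPos l).toFinset.powerset ×ˢ (leafPos r).toFinset.powerset,
      single (remainder (joinPos BC.1 BC.2) (node l r))
        ((prunedForest (joinPos BC.1 BC.2) (node l r)).map totalCutSum).prod =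
      single (remainder BC.1 l) ((prunedForest BC.1 l).map totalCutSum).prod *
        single (remainder BC.2 r) ((prunedForest BC.2 r).map totalCutSum).prod +
      if BC = full then
        single 1 (totalCutSum (node l r)) - single 1 (totalCutSum l) * single 1 (totalCutSum r)
      else 0 := by
    rintro ⟨B, C⟩ hBC
    simp only [Finset.mem_product, Finset.mem_powerset] at hBC
    rw [prunedForest_node_joinPos hBC.1 hBC.2, remainder_node_joinPos, single_mul_single]
    split_ifs with hfull hpair hpair
    · obtain ⟨rfl, rfl⟩ := hfull
      simp [prunedForest_full, remainder_full]
    · exact absurd (Prod.ext hfull.1 hfull.2) hpair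
    · exact absurd (Prod.ext_iff.1 hpair) hfull
    · simp
  rw [keyedCoproduct, toFinset_leafPos_node, sum_powerset_joinPos, Finset.sum_congr rfl hterm,
    Finset.sum_add_distrib, Finset.sum_ite_eq', if_pos (by simp [full]), keyedCoproduct,
    keyedCoproduct, Finset.sum_mul_sum, Finset.sum_product]

theorem keyedCoproduct_eq (T : BTree) :
    keyedCoproduct T = single 1 (totalCutSum T) + rootedCutSum T := by
  induction T with
  | leaf =>
    have : (leafPos leaf).toFinset.powerset = {∅, (leafPos leaf).toFinset} := by decide
    rw [keyedCoproduct, this, Finset.sum_pair (by decide), remainder_empty, prunedForest_empty,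
      remainder_full, prunedForest_full]
    simp [rootedCutSum, totalCutSum, tc, add_comm]
  | node l r ihl ihr =>
    rw [keyedCoproduct_node, ihl, ihr, rootedCutSum_node]
    simp only [add_mul, mul_add]
    abel

@[simp] theorem optForest_one : optForest (1 : WithOne BTree) = 0 := rfl

@[simp] theorem optForest_coe (t : BTree) : optForest (t : WithOne BTree) = {t} := rfl

def evalRemainder : MonoidAlgebra V (WithOne BTree) →+ V :=
  liftNC (AddMonoidHom.id V) fun k => fδ (optForest k)

theorem evalRemainder_rootedCutSum (T : BTree) :
    evalRemainder (rootedCutSum T) = -totalCutSum T := by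
  rw [eq_neg_iff_add_eq_zero, rootedCutSum, map_list_sum, totalCutSum, cutForests, List.map_map,
    List.map_map, ← List.sum_map_add]
  refine List.sum_eq_zero fun x hx => ?_
  obtain ⟨⟨a, m⟩, -, rfl⟩ := List.mem_map.1 hx
  simp [evalRemainder, optForest, ← fδ_add, pow_succ, add_comm _ {a}, Multiset.singleton_add]

theorem sum_powerset_prunedForest_mul_remainder (T : BTree) :
    ∑ A ∈ (leafPos T).toFinset.powerset,
      ((prunedForest A T).map totalCutSum).prod * fδ (optForest (remainder A T)) = 0 := by
  have h := congrArg evalRemainder (keyedCoproduct_eq T)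
  rw [keyedCoproduct, map_sum, map_add, evalRemainder_rootedCutSum] at h
  simpa [evalRemainder, optForest] using h

theorem leafCount_lt_of_mem_prunedForest {A : Finset (List Bool)} {T t : BTree}
    (hA : A ⊆ (leafPos T).toFinset) (hne : A ≠ (leafPos T).toFinset)
    (ht : t ∈ prunedForest A T) : t.leafCount < T.leafCount := by
  obtain ⟨s, hs, hsA⟩ := Finset.exists_of_ssubset (Finset.ssubset_iff_subset_ne.2 ⟨hA, hne⟩)
  exact leafCount_lt_of_mem_maxSub ⟨s, List.mem_toFinset.1 hs, by simpa using hsA⟩ ht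

theorem empty_ne_toFinset_leafPos (T : BTree) : ∅ ≠ (leafPos T).toFinset :=
  ((List.toFinset_nonempty_iff _).2 (leafPos_ne_nil T)).ne_empty.symm

theorem filter_powerset_not_empty_not_full (T : BTree) :
    (leafPos T).toFinset.powerset.filter (fun A => ¬(A ≠ ∅ ∧ A ≠ (leafPos T).toFinset)) =
      {∅, (leafPos T).toFinset} := by
  ext A
  simp only [Finset.mem_filter, Finset.mem_powerset, Finset.mem_insert, Finset.mem_singleton]
  constructor
  · tauto
  · rintro (rfl | rfl) <;> simp

theorem antipode_eq_totalCutSum (S : V →ₐ[ℚ] V)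
    (hS : ∀ T : BTree,
      S (fδ {T}) = - fδ {T} -
        ∑ A ∈ ((leafPos T).toFinset.powerset.filter
            fun A => A ≠ ∅ ∧ A ≠ (leafPos T).toFinset),
          S (fδ ↑(maxSub (fun q => decide (q ∈ A)) T [])) *
            fδ (optForest (quotA (fun q => decide (q ∈ A)) T [])))
    (T : BTree) : S (fδ {T}) = totalCutSum T := by
  have hF : ∀ A ∈ (leafPos T).toFinset.powerset.filter
      (fun A => A ≠ ∅ ∧ A ≠ (leafPos T).toFinset),
      S (fδ ↑(maxSub (fun q => decide (q ∈ A)) T [])) =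
        ((prunedForest A T).map totalCutSum).prod := by
    intro A hA
    simp only [Finset.mem_filter, Finset.mem_powerset] at hA
    rw [fδ_coe, map_list_prod, List.map_map]
    refine congrArg List.prod (List.map_congr_left fun t ht => ?_)
    have hlt := leafCount_lt_of_mem_prunedForest hA.1 hA.2.2 ht
    exact antipode_eq_totalCutSum S hS t
  have h0 := sum_powerset_prunedForest_mul_remainder T
  rw [← Finset.sum_filter_add_sum_filter_not _ fun A => A ≠ ∅ ∧ A ≠ (leafPos T).toFinset,
    filter_powerset_not_empty_not_full, Finset.sum_pair (empty_ne_toFinset_leafPos T),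
    prunedForest_empty, remainder_empty, prunedForest_full, remainder_full] at h0
  rw [hS T, Finset.sum_congr rfl fun A hA => congrArg (· * _) (hF A hA)]
  simp only [List.map_nil, List.prod_nil, one_mul, List.map_cons, List.prod_cons, mul_one,
    optForest_coe, optForest_one, fδ_zero, remainder] at h0
  linear_combination -h0
termination_by T.leafCount
decreasing_by assumption

theorem coeff_sum_map_signed (L : List (Multiset BTree)) (m : Multiset BTree) :
    ((L.map fun x => (-1 : ℚ) ^ Multiset.card x • fδ x).sum).coeff m =
      (-1) ^ Multiset.card m * L.count m := by
  induction L with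
  | nil => simp
  | cons x L ih =>
    rw [List.map_cons, List.sum_cons, AddMonoidAlgebra.coeff_add, Finsupp.add_apply, ih,
      List.count_cons]
    by_cases h : x = m
    · subst h; simp [fδ]; ring
    · simp [fδ, h]

theorem coeff_totalCutSum (T : BTree) (m : Multiset BTree) :
    (totalCutSum T).coeff m = (-1) ^ Multiset.card m * (cutForests T).count m :=
  coeff_sum_map_signed _ m

theorem support_coeff_totalCutSum (T : BTree) :
    (totalCutSum T).coeff.support = (cutForests T).toFinset := by
  ext m
  simp [coeff_totalCutSum, List.count_eq_zero]

theorem neg_one_pow_card_mul_coeff_totalCutSum (T : BTree) (m : Multiset BTree) :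
    (-1) ^ Multiset.card m * (totalCutSum T).coeff m = (cutForests T).count m := by
  rw [coeff_totalCutSum, ← mul_assoc, ← mul_pow, neg_one_mul, neg_neg, one_pow, one_mul]

theorem sum_abs_coeff_totalCutSum (T : BTree) :
    (totalCutSum T).coeff.sum (fun _ c => |c|) = 3 ^ (T.leafCount - 1) := by
  rw [Finsupp.sum, support_coeff_totalCutSum]
  simp only [coeff_totalCutSum, abs_mul, abs_pow, abs_neg, abs_one, one_pow, one_mul,
    Nat.abs_cast]
  rw [← Nat.cast_sum, List.sum_toFinset_count_eq_length, cutForests, List.length_map, length_tc]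
  norm_cast

end BTree

open BTree in
/-- Properties of the antipode of the Hopf algebra `H` of binary forests:
if `S` is an algebra endomorphism of `H` satisfying the defining recursion
`S(T) = −T − Σ_{(T)} S(T′)·T″` over the reduced coproduct (indexed by the
proper nonempty subsets `A` of the leaf set, i.e. the nontrivial
binary-admissible cuts), then for every tree `T` with `n` leaves:
every term of `S(T)` is a forest arising from a binary-total cut of `T`, the
sign of its coefficient is `(−1)^{number of trees in the forest}`, and the sum
of the absolute values of the coefficients of `S(T)` equals `3^{n−1}`. -/
theorem antipode_properties (S : V →ₐ[ℚ] V)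
    (hS : ∀ T : BTree,
      S (fδ {T}) = - fδ {T} -
        ∑ A ∈ ((leafPos T).toFinset.powerset.filter
            fun A => A ≠ ∅ ∧ A ≠ (leafPos T).toFinset),
          S (fδ ↑(maxSub (fun q => decide (q ∈ A)) T [])) *
            fδ (optForest (quotA (fun q => decide (q ∈ A)) T [])))
    (T : BTree) (n : ℕ) (h : T.leafCount = n) :
    (∀ m : Multiset BTree, (S (fδ {T})).coeff m ≠ 0 →
      (∃ pc ∈ tc T, Multiset.Rel Iso (pc.1 ::ₘ pc.2) m) ∧
      0 < (-1 : ℚ) ^ (Multiset.card m) * ((S (fδ {T})).coeff m)) ∧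
    (S (fδ {T})).coeff.sum (fun _ c => |c|) = 3 ^ (n - 1) := by
  rw [antipode_eq_totalCutSum S hS, ← h, sum_abs_coeff_totalCutSum]
  refine ⟨fun m hm => ?_, rfl⟩
  have hmem : m ∈ cutForests T := by
    rwa [← List.mem_toFinset, ← support_coeff_totalCutSum, Finsupp.mem_support_iff]
  obtain ⟨pc, hpc, rfl⟩ := List.mem_map.1 hmem
  refine ⟨⟨pc, hpc, Multiset.rel_refl_of_refl_on fun t _ => Iso.refl t⟩, ?_⟩
  rw [neg_one_pow_card_mul_coeff_totalCutSum]
  exact_mod_cast List.count_pos_iff.2 hmem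

end
end
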